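/- arXiv:1707.00472 — 2 statements merged into one kernel-verified Lean document; each statement's English description precedes it below -/
import Mathlib

section
/- Let ψ be a reconciliation map for (P,H,φ) and let w be an interior vertex of P such that ψ(w) ≻_H m(w) and ψ(w) ≠ ψ(v') for all children v' of w. Then the map ψ^down_w, which sends w to the unique vertex in A(w) ∩ Ch(ψ(w)) (the child of ψ(w) lying on the path from ρ_H to m(w)) and agrees with ψ elsewhere, is again a reconciliation map for (P,H,φ). -/
open Classical

namespace Recon

/-- `Anc p u v` : `u` is above or equal to `v` (i.e. `u` is an ancestor of `v`)
with respect to the parent map `p` of a rooted tree. -/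
def Anc {V : Type*} (p : V → V) (u v : V) : Prop := ∃ n : ℕ, p^[n] v = u

/-- `u` is strictly above `v`. -/
def SAnc {V : Type*} (p : V → V) (u v : V) : Prop := Anc p u v ∧ u ≠ v

/-- The length of the (undirected) path between `u` and `v` in the tree with parent map `p`. -/
noncomputable def tdist {V : Type*} (p : V → V) (u v : V) : ℕ :=
  sInf {k : ℕ | ∃ n m : ℕ, n + m = k ∧ p^[n] u = p^[m] v}

/-- `p` is the parent map of a rooted tree on `V` with root `r` and depth function `dp`. -/
structure IsRootedTree {V : Type*} (p : V → V) (r : V) (dp : V → ℕ) : Prop where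
  parent_root : p r = r
  depth_root : dp r = 0
  depth_parent : ∀ v, v ≠ r → dp v = dp (p v) + 1

/-- `v` is a leaf: it has no children. -/
def IsLeaf {V : Type*} (p : V → V) (v : V) : Prop := ∀ u, p u = v → u = v

/-- `u` is a child of `v`. -/
def IsChild {V : Type*} (p : V → V) (u v : V) : Prop := p u = v ∧ u ≠ v

/-- every non-leaf vertex has exactly two children (binary tree). -/
def IsBinary {V : Type*} (p : V → V) : Prop :=
  ∀ v, ¬ IsLeaf p v →
    ∃ u w, u ≠ w ∧ IsChild p u v ∧ IsChild p w v ∧ ∀ z, IsChild p z v → z = u ∨ z = w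

/-- `w` is a least common ancestor of the set `S`. -/
def IsLCA {V : Type*} (p : V → V) (S : Set V) (w : V) : Prop :=
  (∀ s ∈ S, Anc p w s) ∧ ∀ w', (∀ s ∈ S, Anc p w' s) → Anc p w' w

/-- The set `A(v)`: all vertices on the path from the root `r` down to `mv`. -/
def ASet {V : Type*} (p : V → V) (r : V) (mv : V) : Set V :=
  {w | Anc p r w ∧ Anc p w mv}

/-- `ψ` is a reconciliation map for `(P,H,φ)`: it restricts to `φ` on the leaves of `P`,
and the image of a vertex is above or equal to the image of each of its children. -/
def IsRecon {VP VH : Type*} (pP : VP → VP) (pH : VH → VH) (φ ψ : VP → VH) : Prop :=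
  (∀ x, IsLeaf pP x → ψ x = φ x) ∧
  ∀ v v', IsChild pP v' v → Anc pH (ψ v) (ψ v')

/-- The path-distance between two maps `V(P) → V(H)`. -/
noncomputable def dpath {VP VH : Type*} [Fintype VP] (pH : VH → VH) (ψ ψ' : VP → VH) : ℕ :=
  ∑ v : VP, tdist pH (ψ v) (ψ' v)

/-- One edit (up or down) operation transforming `ψ` into `ψ'`. -/
def EditStep {VP VH : Type*} [DecidableEq VP] (pP : VP → VP) (pH : VH → VH) (rH : VH)
    (m : VP → VH) (ψ ψ' : VP → VH) : Prop :=
  ∃ w : VP,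
    (ψ w ≠ rH ∧ ψ w ≠ ψ (pP w) ∧ ψ' = Function.update ψ w (pH (ψ w))) ∨
    (¬ IsLeaf pP w ∧ SAnc pH (ψ w) (m w) ∧ (∀ v', IsChild pP v' w → ψ w ≠ ψ v') ∧
      ∃ c, IsChild pH c (ψ w) ∧ c ∈ ASet pH rH (m w) ∧ ψ' = Function.update ψ w c)

/-- The edit distance: the least number of up/down operations transforming `ψ` into `ψ'`. -/
noncomputable def editDist {VP VH : Type*} [DecidableEq VP] (pP : VP → VP) (pH : VH → VH)
    (rH : VH) (m : VP → VH) (ψ ψ' : VP → VH) : ℕ :=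
  sInf {n : ℕ | ∃ f : ℕ → VP → VH, f 0 = ψ ∧ f n = ψ' ∧
    ∀ i < n, EditStep pP pH rH m (f i) (f (i + 1))}

/-- The median of a multiset of reals. -/
noncomputable def med (A : Multiset ℝ) : ℝ :=
  if A.card % 2 = 1 then (A.sort (· ≤ ·)).getD (A.card / 2) 0
  else ((A.sort (· ≤ ·)).getD (A.card / 2 - 1) 0 + (A.sort (· ≤ ·)).getD (A.card / 2) 0) / 2

/-- The median of a multiset of integers, rounded to the nearest integer (halves up). -/
noncomputable def zmed (A : Multiset ℤ) : ℤ :=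
  round (med (A.map (fun z => (z : ℝ))))

/-!
Moving `ψ(w)` down to its child `c` keeps `ψ(w) ⪰ c ⪰ ψ(v')` intact above `w`; below `w`
we need `c ⪰ ψ(v')` for each child `v'`. Both `c` and `ψ(v')` lie above `m(v') ⪯ m(w) ⪯ c`,
so they are comparable, and `ψ(v') ≻ c` would force `ψ(v') ⪰ ψ(w)`, hence `ψ(v') = ψ(w)`.
-/

section Tree

variable {V : Type*} {p : V → V}

theorem Anc.refl (p : V → V) (v : V) : Anc p v v := ⟨0, rfl⟩

theorem Anc.trans {u v x : V} (huv : Anc p u v) (hvx : Anc p v x) : Anc p u x := by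
  obtain ⟨a, rfl⟩ := huv
  obtain ⟨b, rfl⟩ := hvx
  exact ⟨a + b, Function.iterate_add_apply p a b x⟩

theorem Anc.parent (p : V → V) (v : V) : Anc p (p v) v := ⟨1, rfl⟩

theorem Anc.total_of_anc {u v x : V} (hux : Anc p u x) (hvx : Anc p v x) :
    Anc p u v ∨ Anc p v u := by
  obtain ⟨a, rfl⟩ := hux
  obtain ⟨b, rfl⟩ := hvx
  rcases le_total a b with hab | hba
  · exact Or.inr ⟨b - a, by rw [← Function.iterate_add_apply, Nat.sub_add_cancel hab]⟩
  · exact Or.inl ⟨a - b, by rw [← Function.iterate_add_apply, Nat.sub_add_cancel hba]⟩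

theorem IsRootedTree.depth_iterate_le {r : V} {dp : V → ℕ} (hT : IsRootedTree p r dp)
    (n : ℕ) (v : V) : dp (p^[n] v) ≤ dp v ∧ (dp (p^[n] v) = dp v → p^[n] v = v) := by
  induction n with
  | zero => simp
  | succ n ih =>
    rw [Function.iterate_succ_apply']
    by_cases hroot : p^[n] v = r
    · rw [hroot, hT.parent_root]
      refine ⟨hroot ▸ ih.1, fun h ↦ ?_⟩
      rw [← hroot] at h ⊢
      exact ih.2 h
    · have := hT.depth_parent _ hroot
      exact ⟨by omega, by omega⟩

theorem IsRootedTree.anc_antisymm {r : V} {dp : V → ℕ} (hT : IsRootedTree p r dp) {u v : V}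
    (huv : Anc p u v) (hvu : Anc p v u) : u = v := by
  obtain ⟨a, rfl⟩ := huv
  obtain ⟨b, hb⟩ := hvu
  have hle := (hT.depth_iterate_le b (p^[a] v)).1
  rw [hb] at hle
  exact (hT.depth_iterate_le a v).2 (le_antisymm (hT.depth_iterate_le a v).1 hle)

theorem IsRootedTree.anc_of_parent_sAnc {r : V} {dp : V → ℕ} (hT : IsRootedTree p r dp)
    {c x y : V} (hcx : SAnc p (p c) x) (hcy : Anc p c y) (hxy : Anc p x y) : Anc p c x := by
  rcases Anc.total_of_anc hcy hxy with hcx' | ⟨_ | k, hk⟩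
  · exact hcx'
  · exact hk ▸ Anc.refl p c
  · rw [Function.iterate_succ_apply] at hk
    exact absurd (hT.anc_antisymm hcx.1 ⟨k, hk⟩) hcx.2

theorem IsLCA.anc_of_subset {S T : Set V} {s t : V} (hs : IsLCA p S s) (ht : IsLCA p T t)
    (hTS : T ⊆ S) : Anc p s t :=
  ht.2 s fun x hx ↦ hs.1 x (hTS hx)

end Tree

section Reconciliation

variable {VP VH : Type*} {pP : VP → VP} {pH : VH → VH} {φ ψ : VP → VH}

theorem IsRecon.anc_of_anc (hψ : IsRecon pP pH φ ψ) {v x : VP} (hvx : Anc pP v x) :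
    Anc pH (ψ v) (ψ x) := by
  obtain ⟨n, rfl⟩ := hvx
  induction n with
  | zero => exact Anc.refl pH (ψ x)
  | succ n ih =>
    rw [Function.iterate_succ_apply']
    by_cases hfix : pP (pP^[n] x) = pP^[n] x
    · rwa [hfix]
    · exact (hψ.2 _ _ ⟨rfl, Ne.symm hfix⟩).trans ih

theorem IsRecon.anc_lca (hψ : IsRecon pP pH φ ψ) {m : VP → VH}
    (hm : ∀ v, IsLCA pH {h | ∃ x, IsLeaf pP x ∧ Anc pP v x ∧ φ x = h} (m v)) (v : VP) :
    Anc pH (ψ v) (m v) := by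
  refine (hm v).2 _ ?_
  rintro _ ⟨x, hx, hvx, rfl⟩
  rw [← hψ.1 x hx]
  exact hψ.anc_of_anc hvx

theorem lca_anc_of_isChild {m : VP → VH}
    (hm : ∀ v, IsLCA pH {h | ∃ x, IsLeaf pP x ∧ Anc pP v x ∧ φ x = h} (m v)) {v v' : VP}
    (hv' : IsChild pP v' v) : Anc pH (m v) (m v') :=
  (hm v).anc_of_subset (hm v') fun _ ⟨x, hx, hv'x, hφx⟩ ↦
    ⟨x, hx, (hv'.1 ▸ Anc.parent pP v' : Anc pP v v').trans hv'x, hφx⟩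

theorem IsRecon.update [DecidableEq VP] (hψ : IsRecon pP pH φ ψ) {w : VP} (hw : ¬ IsLeaf pP w)
    {c : VH} (habove : ∀ v, IsChild pP w v → Anc pH (ψ v) c)
    (hbelow : ∀ v', IsChild pP v' w → Anc pH c (ψ v')) :
    IsRecon pP pH φ (Function.update ψ w c) := by
  refine ⟨fun x hx ↦ ?_, fun v v' hv' ↦ ?_⟩
  · rw [Function.update_of_ne (by rintro rfl; exact hw hx)]
    exact hψ.1 x hx
  · rcases eq_or_ne v w with rfl | hvw
    · rw [Function.update_self, Function.update_of_ne hv'.2]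
      exact hbelow v' hv'
    rw [Function.update_of_ne hvw]
    rcases eq_or_ne v' w with rfl | hv'w
    · rw [Function.update_self]
      exact habove v hv'
    rw [Function.update_of_ne hv'w]
    exact hψ.2 v v' hv'

end Reconciliation

theorem stmt5_general {VP VH : Type*} (pP : VP → VP) (pH : VH → VH) (rH : VH)
    (dpH : VH → ℕ)
    (hH : IsRootedTree pH rH dpH)
    (φ : VP → VH)
    (m : VP → VH)
    (hm : ∀ v, IsLCA pH {h | ∃ x, IsLeaf pP x ∧ Anc pP v x ∧ φ x = h} (m v))
    (ψ : VP → VH) (hψ : IsRecon pP pH φ ψ) (w : VP) (hw : ¬ IsLeaf pP w)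
    (h2 : ∀ v', IsChild pP v' w → ψ w ≠ ψ v')
    (c : VH) (hc1 : IsChild pH c (ψ w)) (hc2 : c ∈ ASet pH rH (m w)) :
    IsRecon pP pH φ (Function.update ψ w c) := by
  refine hψ.update hw (fun v hwv ↦ ?_) (fun v' hv' ↦ ?_)
  · exact (hψ.2 v w hwv).trans (hc1.1 ▸ Anc.parent pH c)
  · have hsAnc : SAnc pH (pH c) (ψ v') := hc1.1 ▸ ⟨hψ.2 w v' hv', h2 v' hv'⟩
    exact hH.anc_of_parent_sAnc hsAnc (hc2.2.trans (lca_anc_of_isChild hm hv'))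
      (hψ.anc_lca hm v')

theorem stmt5 [DecidableEq VP] {VP VH : Type*} (pP : VP → VP) (pH : VH → VH) (rP : VP) (rH : VH)
    (dpP : VP → ℕ) (dpH : VH → ℕ)
    (hP : IsRootedTree pP rP dpP) (hH : IsRootedTree pH rH dpH)
    (hbP : IsBinary pP) (hbH : IsBinary pH)
    (φ : VP → VH) (hφ : ∀ x, IsLeaf pP x → IsLeaf pH (φ x))
    (m : VP → VH)
    (hm : ∀ v, IsLCA pH {h | ∃ x, IsLeaf pP x ∧ Anc pP v x ∧ φ x = h} (m v))
    (ψ : VP → VH) (hψ : IsRecon pP pH φ ψ) (w : VP) (hw : ¬ IsLeaf pP w)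
    (h1 : SAnc pH (ψ w) (m w))
    (h2 : ∀ v', IsChild pP v' w → ψ w ≠ ψ v')
    (c : VH) (hc1 : IsChild pH c (ψ w)) (hc2 : c ∈ ASet pH rH (m w)) :
    IsRecon pP pH φ (Function.update ψ w c) :=
  stmt5_general pP pH rH dpH hH φ m hm ψ hψ w hw h2 c hc1 hc2

end Recon
end

section
/- Given reconciliation maps ψ_1,…,ψ_l for (P,H,φ) (l ≥ 1), the map ψ_min defined by letting ψ_min(v) be the lowest (with respect to ⪰_H) element of {ψ_1(v),…,ψ_l(v)} is well-defined and is itself a reconciliation map for (P,H,φ). -/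
open Classical

namespace Recon

namespace Anc

variable {V : Type*} {p : V → V}

theorem refl_s13 (a : V) : Anc p a a := ⟨0, rfl⟩

theorem trans_s13 {a b c : V} (hab : Anc p a b) (hbc : Anc p b c) : Anc p a c := by
  obtain ⟨n, rfl⟩ := hab
  obtain ⟨k, rfl⟩ := hbc
  exact ⟨n + k, Function.iterate_add_apply p n k c⟩

/-- The ancestors of `x` form the chain `x, p x, p (p x), …`, so the one reached from `x` in
the fewest parent steps lies below all the others. -/
theorem exists_lowest {ι : Type*} [Nonempty ι] {f : ι → V} {x : V}
    (hf : ∀ i, Anc p (f i) x) : ∃ i, ∀ j, Anc p (f j) (f i) := by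
  have hsteps : ∃ n i, p^[n] x = f i := by
    obtain ⟨n, hn⟩ := hf (Classical.arbitrary ι)
    exact ⟨n, _, hn⟩
  obtain ⟨i, hi⟩ := Nat.find_spec hsteps
  refine ⟨i, fun j => ?_⟩
  obtain ⟨n, hn⟩ := hf j
  have hle : Nat.find hsteps ≤ n := Nat.find_min' hsteps ⟨j, hn⟩
  refine ⟨n - Nat.find hsteps, ?_⟩
  rw [← hi, ← Function.iterate_add_apply, Nat.sub_add_cancel hle, hn]

end Anc

namespace IsRecon

variable {VP VH : Type*} {pP : VP → VP} {pH : VH → VH} {φ ψ : VP → VH}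

theorem anc_apply (hψ : IsRecon pP pH φ ψ) {v w : VP} (hvw : Anc pP v w) :
    Anc pH (ψ v) (ψ w) := by
  obtain ⟨n, rfl⟩ := hvw
  induction n with
  | zero => exact Anc.refl_s13 _
  | succ n ih =>
    rw [Function.iterate_succ_apply']
    by_cases hroot : pP (pP^[n] w) = pP^[n] w
    · rwa [hroot]
    · exact (hψ.2 _ _ ⟨rfl, fun h => hroot h.symm⟩).trans_s13 ih

/-- `ψ v` is a common ancestor of the images `φ x = ψ x` of the leaves `x` below `v`,
hence an ancestor of their least common ancestor `m v`. -/
theorem anc_lca_s13 (hψ : IsRecon pP pH φ ψ) {m : VP → VH}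
    (hm : ∀ v, IsLCA pH {h | ∃ x, IsLeaf pP x ∧ Anc pP v x ∧ φ x = h} (m v)) (v : VP) :
    Anc pH (ψ v) (m v) := by
  refine (hm v).2 _ ?_
  rintro _ ⟨x, hx, hvx, rfl⟩
  rw [← hψ.1 x hx]
  exact hψ.anc_apply hvx

theorem of_forall_anc {ι : Type*} {Ψ : ι → VP → VH} (hΨ : ∀ i, IsRecon pP pH φ (Ψ i))
    (hψ : ∀ v, (∃ i, ψ v = Ψ i v) ∧ ∀ i, Anc pH (Ψ i v) (ψ v)) : IsRecon pP pH φ ψ := by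
  constructor
  · intro x hx
    obtain ⟨i, hi⟩ := (hψ x).1
    rw [hi, (hΨ i).1 x hx]
  · intro v v' hchild
    obtain ⟨i, hi⟩ := (hψ v).1
    rw [hi]
    exact ((hΨ i).2 v v' hchild).trans_s13 ((hψ v').2 i)

end IsRecon

theorem stmt13_general {VP VH : Type*} (pP : VP → VP) (pH : VH → VH)
    (φ : VP → VH)
    (m : VP → VH)
    (hm : ∀ v, IsLCA pH {h | ∃ x, IsLeaf pP x ∧ Anc pP v x ∧ φ x = h} (m v))
    (l : ℕ) (hl : 1 ≤ l) (Ψ : Fin l → VP → VH) (hΨ : ∀ i, IsRecon pP pH φ (Ψ i)) :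
    ∃ ψmin : VP → VH,
      (∀ v, (∃ i, ψmin v = Ψ i v) ∧ ∀ i, Anc pH (Ψ i v) (ψmin v)) ∧
      IsRecon pP pH φ ψmin := by
  have : Nonempty (Fin l) := ⟨⟨0, hl⟩⟩
  choose lowest hlowest using fun v =>
    Anc.exists_lowest (fun i => (hΨ i).anc_lca_s13 hm v)
  have hmin : ∀ v, (∃ i, Ψ (lowest v) v = Ψ i v) ∧ ∀ i, Anc pH (Ψ i v) (Ψ (lowest v) v) :=
    fun v => ⟨⟨lowest v, rfl⟩, hlowest v⟩
  exact ⟨fun v => Ψ (lowest v) v, hmin, IsRecon.of_forall_anc hΨ hmin⟩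

theorem stmt13 {VP VH : Type*} (pP : VP → VP) (pH : VH → VH) (rP : VP) (rH : VH)
    (dpP : VP → ℕ) (dpH : VH → ℕ)
    (hP : IsRootedTree pP rP dpP) (hH : IsRootedTree pH rH dpH)
    (hbP : IsBinary pP) (hbH : IsBinary pH)
    (φ : VP → VH) (hφ : ∀ x, IsLeaf pP x → IsLeaf pH (φ x))
    (m : VP → VH)
    (hm : ∀ v, IsLCA pH {h | ∃ x, IsLeaf pP x ∧ Anc pP v x ∧ φ x = h} (m v))
    (l : ℕ) (hl : 1 ≤ l) (Ψ : Fin l → VP → VH) (hΨ : ∀ i, IsRecon pP pH φ (Ψ i)) :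
    ∃ ψmin : VP → VH,
      (∀ v, (∃ i, ψmin v = Ψ i v) ∧ ∀ i, Anc pH (Ψ i v) (ψmin v)) ∧
      IsRecon pP pH φ ψmin :=
  stmt13_general pP pH φ m hm l hl Ψ hΨ

end Recon
end
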